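/- For all real x, erfc''(x)·erfc(x) - (erfc'(x))² ≤ 0, i.e., (4x/√π)e^{-x²}·erfc(x) ≤ (4/π)e^{-2x²}. -/

import Mathlib

noncomputable def erfc (x : ℝ) : ℝ :=
  1 - (2 / Real.sqrt Real.pi) * ∫ t in (0:ℝ)..x, Real.exp (-t ^ 2)

/-! For `x ≤ 0` the left-hand side is nonpositive because `erfc ≥ 0`. For `x > 0` write
`erfc x = (2/√π) ∫ₓ^∞ e^{-t²} dt` and use the Gordon bound `∫ₓ^∞ e^{-t²} dt ≤ e^{-x²}/(2x)`, obtained by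
inserting the factor `t/x ≥ 1` under the integral, which makes it elementary. -/

open MeasureTheory Set Filter Topology Real

lemma integrableOn_Ioi_exp_neg_sq (a : ℝ) : IntegrableOn (fun t : ℝ => exp (-t ^ 2)) (Ioi a) := by
  simpa using (integrable_exp_neg_mul_sq one_pos).integrableOn (s := Ioi a)

lemma integral_Ioi_mul_exp_neg_sq (a : ℝ) :
    ∫ t in Ioi a, t * exp (-t ^ 2) = exp (-a ^ 2) / 2 := by
  have hderiv (t : ℝ) : HasDerivAt (fun t : ℝ => -exp (-t ^ 2) / 2) (t * exp (-t ^ 2)) t := by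
    have h := (((hasDerivAt_pow 2 t).fun_neg).exp.fun_neg).div_const 2
    exact h.congr_deriv (by norm_num; ring)
  have hlim : Tendsto (fun t : ℝ => -exp (-t ^ 2) / 2) atTop (𝓝 0) := by
    have h := ((tendsto_exp_atBot.comp (tendsto_neg_atTop_atBot.comp
      (tendsto_pow_atTop two_ne_zero))).neg).div_const (2 : ℝ)
    simpa [Function.comp_def] using h
  have hint : IntegrableOn (fun t : ℝ => t * exp (-t ^ 2)) (Ioi a) := by
    simpa using (integrable_mul_exp_neg_mul_sq one_pos).integrableOn (s := Ioi a)
  rw [integral_Ioi_of_hasDerivAt_of_tendsto' (fun t _ => hderiv t) hint hlim]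
  ring

lemma integral_Ioi_exp_neg_sq_le {x : ℝ} (hx : 0 < x) :
    ∫ t in Ioi x, exp (-t ^ 2) ≤ exp (-x ^ 2) / (2 * x) :=
  calc ∫ t in Ioi x, exp (-t ^ 2)
      ≤ ∫ t in Ioi x, x⁻¹ * (t * exp (-t ^ 2)) := by
        refine setIntegral_mono_on (integrableOn_Ioi_exp_neg_sq x)
          (by simpa using ((integrable_mul_exp_neg_mul_sq one_pos).const_mul x⁻¹).integrableOn)
          measurableSet_Ioi fun t ht => ?_
        have hxt : 1 ≤ x⁻¹ * t := by rw [inv_mul_eq_div, one_le_div hx]; exact le_of_lt ht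
        nlinarith [exp_pos (-t ^ 2)]
    _ = exp (-x ^ 2) / (2 * x) := by
        rw [integral_const_mul, integral_Ioi_mul_exp_neg_sq]
        field_simp

lemma erfc_eq_integral_Ioi (x : ℝ) : erfc x = 2 / √π * ∫ t in Ioi x, exp (-t ^ 2) := by
  have hsplit := intervalIntegral.integral_Ioi_sub_Ioi' (integrableOn_Ioi_exp_neg_sq 0)
    (integrableOn_Ioi_exp_neg_sq x)
  have hgauss : ∫ t in Ioi (0 : ℝ), exp (-t ^ 2) = √π / 2 := by
    simpa using integral_gaussian_Ioi 1
  rw [erfc, ← hsplit, hgauss]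
  field_simp
  ring

lemma erfc_nonneg (x : ℝ) : 0 ≤ erfc x := by
  rw [erfc_eq_integral_Ioi]
  exact mul_nonneg (by positivity) (setIntegral_nonneg measurableSet_Ioi fun t _ => (exp_pos _).le)

lemma erfc_le_exp_neg_sq_div {x : ℝ} (hx : 0 < x) : erfc x ≤ exp (-x ^ 2) / (x * √π) :=
  calc erfc x ≤ 2 / √π * (exp (-x ^ 2) / (2 * x)) := by
        rw [erfc_eq_integral_Ioi]
        exact mul_le_mul_of_nonneg_left (integral_Ioi_exp_neg_sq_le hx) (by positivity)
    _ = exp (-x ^ 2) / (x * √π) := by field_simp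

theorem erfc_log_second_deriv_nonpos (x : ℝ) :
    (4 * x / Real.sqrt Real.pi) * Real.exp (-x ^ 2) * erfc x
      ≤ (4 / Real.pi) * Real.exp (-2 * x ^ 2) := by
  rcases le_or_gt x 0 with hx | hx
  · have hlhs : 4 * x / √π * exp (-x ^ 2) * erfc x ≤ 0 :=
      mul_nonpos_of_nonpos_of_nonneg
        (mul_nonpos_of_nonpos_of_nonneg (div_nonpos_of_nonpos_of_nonneg (by linarith) (by positivity))
          (exp_pos _).le)
        (erfc_nonneg x)
    exact hlhs.trans (by positivity)
  · calc 4 * x / √π * exp (-x ^ 2) * erfc x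
        ≤ 4 * x / √π * exp (-x ^ 2) * (exp (-x ^ 2) / (x * √π)) :=
          mul_le_mul_of_nonneg_left (erfc_le_exp_neg_sq_div hx) (by positivity)
      _ = 4 / π * exp (-2 * x ^ 2) := by
          have hexp : exp (-x ^ 2) * exp (-x ^ 2) = exp (-2 * x ^ 2) := by rw [← exp_add]; ring_nf
          rw [← hexp]
          field_simp
          exact (sq_sqrt pi_pos.le).symm
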